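/- arXiv:1008.4851 — 2 statements merged into one kernel-verified Lean document; each statement's English description precedes it below -/
import Mathlib

section
/- The operator identity (∂_t - ∂_x³ + (3/x²)∂_x - 3/x³) ∘ DT[x] = DT[x] ∘ (∂_t - ∂_x³) holds on smooth functions of (t,x) with x ≠ 0, where DT[x](w) = w_x - w/x. -/
noncomputable section

/-- Partial derivative with respect to `t` (first argument). -/
def pt (f : ℝ → ℝ → ℝ) : ℝ → ℝ → ℝ := fun t x => deriv (fun s => f s x) t

/-- Partial derivative with respect to `x` (second argument). -/
def px (f : ℝ → ℝ → ℝ) : ℝ → ℝ → ℝ := fun t x => deriv (fun y => f t y) x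

/-- Iterated `x`-derivative. -/
def pxn (n : ℕ) (f : ℝ → ℝ → ℝ) : ℝ → ℝ → ℝ := px^[n] f

/-- Smoothness of a function of two real variables. -/
def Smooth2 (f : ℝ → ℝ → ℝ) : Prop := ContDiff ℝ (⊤ : ℕ∞) (Function.uncurry f)

/-- The Darboux transformation built from a nonvanishing function `φ`. -/
def DT (φ f : ℝ → ℝ → ℝ) : ℝ → ℝ → ℝ := fun t x => px f t x - (px φ t x / φ t x) * f t x

namespace Stmt11Aux

open Function

lemma hasDerivAt_slice_x {f : ℝ → ℝ → ℝ} (hf : Smooth2 f) (t x : ℝ) :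
    HasDerivAt (fun y => f t y) (fderiv ℝ (uncurry f) (t, x) (0, 1)) x := by
  have h1 : HasDerivAt (fun y : ℝ => ((t, y) : ℝ × ℝ)) ((0 : ℝ), (1 : ℝ)) x :=
    (hasDerivAt_const x t).prodMk (hasDerivAt_id x)
  exact (((hf.differentiable (by simp)) (t, x)).hasFDerivAt).comp_hasDerivAt x h1

lemma hasDerivAt_slice_t {f : ℝ → ℝ → ℝ} (hf : Smooth2 f) (t x : ℝ) :
    HasDerivAt (fun s => f s x) (fderiv ℝ (uncurry f) (t, x) (1, 0)) t := by
  have h1 : HasDerivAt (fun s : ℝ => ((s, x) : ℝ × ℝ)) ((1 : ℝ), (0 : ℝ)) t :=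
    (hasDerivAt_id t).prodMk (hasDerivAt_const t x)
  exact (((hf.differentiable (by simp)) (t, x)).hasFDerivAt).comp_hasDerivAt t h1

lemma px_eq {f : ℝ → ℝ → ℝ} (hf : Smooth2 f) (t x : ℝ) :
    px f t x = fderiv ℝ (uncurry f) (t, x) (0, 1) :=
  (hasDerivAt_slice_x hf t x).deriv

lemma pt_eq {f : ℝ → ℝ → ℝ} (hf : Smooth2 f) (t x : ℝ) :
    pt f t x = fderiv ℝ (uncurry f) (t, x) (1, 0) :=
  (hasDerivAt_slice_t hf t x).deriv

lemma smooth_px {f : ℝ → ℝ → ℝ} (hf : Smooth2 f) : Smooth2 (px f) := by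
  have h : uncurry (px f) = fun p : ℝ × ℝ => fderiv ℝ (uncurry f) p (0, 1) := by
    funext p
    cases p with
    | mk t x => exact px_eq hf t x
  unfold Smooth2
  rw [h]
  exact (hf.fderiv_right (by simp)).clm_apply contDiff_const

lemma smooth_pt {f : ℝ → ℝ → ℝ} (hf : Smooth2 f) : Smooth2 (pt f) := by
  have h : uncurry (pt f) = fun p : ℝ × ℝ => fderiv ℝ (uncurry f) p (1, 0) := by
    funext p
    cases p with
    | mk t x => exact pt_eq hf t x
  unfold Smooth2
  rw [h]
  exact (hf.fderiv_right (by simp)).clm_apply contDiff_const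

lemma smooth_sect_x {f : ℝ → ℝ → ℝ} (hf : Smooth2 f) (t : ℝ) :
    ContDiff ℝ (⊤ : ℕ∞) (fun y => f t y) :=
  hf.comp (contDiff_const.prodMk contDiff_id)

lemma smooth_sect_t {f : ℝ → ℝ → ℝ} (hf : Smooth2 f) (x : ℝ) :
    ContDiff ℝ (⊤ : ℕ∞) (fun s => f s x) :=
  hf.comp (contDiff_id.prodMk contDiff_const)

/-- Clairaut's theorem for smooth functions of two variables. -/
lemma clairaut {f : ℝ → ℝ → ℝ} (hf : Smooth2 f) (t x : ℝ) :
    pt (px f) t x = px (pt f) t x := by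
  set F := uncurry f with hF
  set F' := fderiv ℝ F with hF'
  have hFdiff : Differentiable ℝ F := hf.differentiable (by simp)
  have hF'smooth : ContDiff ℝ (⊤ : ℕ∞) F' := hf.fderiv_right (by simp)
  have hF'diff : Differentiable ℝ F' := hF'smooth.differentiable (by simp)
  set F'' := fderiv ℝ F' (t, x) with hF''
  have hsym : F'' (1, 0) (0, 1) = F'' (0, 1) (1, 0) :=
    second_derivative_symmetric (fun y => (hFdiff y).hasFDerivAt)
      (hF'diff (t, x)).hasFDerivAt _ _
  -- identify pt (px f) t x with F'' (1,0) (0,1)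
  have hpx : uncurry (px f) = fun p : ℝ × ℝ => F' p (0, 1) := by
    funext p; cases p with | mk a b => exact px_eq hf a b
  have hpt : uncurry (pt f) = fun p : ℝ × ℝ => F' p (1, 0) := by
    funext p; cases p with | mk a b => exact pt_eq hf a b
  have e1 : pt (px f) t x = fderiv ℝ (uncurry (px f)) (t, x) (1, 0) :=
    pt_eq (smooth_px hf) t x
  have e2 : px (pt f) t x = fderiv ℝ (uncurry (pt f)) (t, x) (0, 1) :=
    px_eq (smooth_pt hf) t x
  have d1 : HasFDerivAt (fun p : ℝ × ℝ => F' p (0, 1))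
      ((ContinuousLinearMap.apply ℝ ℝ ((0 : ℝ), (1 : ℝ))).comp F'') (t, x) :=
    (ContinuousLinearMap.apply ℝ ℝ ((0 : ℝ), (1 : ℝ))).hasFDerivAt.comp _
      (hF'diff (t, x)).hasFDerivAt
  have d2 : HasFDerivAt (fun p : ℝ × ℝ => F' p (1, 0))
      ((ContinuousLinearMap.apply ℝ ℝ ((1 : ℝ), (0 : ℝ))).comp F'') (t, x) :=
    (ContinuousLinearMap.apply ℝ ℝ ((1 : ℝ), (0 : ℝ))).hasFDerivAt.comp _
      (hF'diff (t, x)).hasFDerivAt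
  rw [e1, e2, hpx, hpt, d1.fderiv, d2.fderiv]
  exact hsym

lemma pxn_sect (n : ℕ) (f : ℝ → ℝ → ℝ) (t : ℝ) :
    pxn n f t = deriv^[n] (f t) := by
  induction n generalizing f with
  | zero => rfl
  | succ k ih =>
      have h1 : pxn (k + 1) f = px (pxn k f) := Function.iterate_succ_apply' px k f
      rw [h1]
      have h2 : px (pxn k f) t = deriv (pxn k f t) := rfl
      rw [h2, ih f, ← Function.iterate_succ_apply' deriv k (f t)]

end Stmt11Aux

open Stmt11Aux Function in
/-- the intertwining identity
(∂_t - ∂_x³ + (3/x²)∂_x - 3/x³) ∘ DT[x] = DT[x] ∘ (∂_t - ∂_x³)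
on smooth functions, for x ≠ 0, where DT[x](w) = w_x - w/x. -/
theorem stmt_11 (w : ℝ → ℝ → ℝ) (hw : Smooth2 w) :
    ∀ t x : ℝ, x ≠ 0 →
      pt (fun t x => px w t x - w t x / x) t x
        - pxn 3 (fun t x => px w t x - w t x / x) t x
        + 3 / x ^ 2 * px (fun t x => px w t x - w t x / x) t x
        - 3 / x ^ 3 * (px w t x - w t x / x)
      = px (fun t x => pt w t x - pxn 3 w t x) t x
        - (pt w t x - pxn 3 w t x) / x := by
  intro t x hx
  -- one-variable sections
  set W : ℝ → ℝ := fun y => w t y with hWdef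
  have hW : ContDiff ℝ (⊤ : ℕ∞) W := smooth_sect_x hw t
  have hWinf : ContDiff ℝ (⊤ : ℕ∞) W := hW.of_le (by simp)
  have hdiff : ∀ k : ℕ, Differentiable ℝ (deriv^[k] W) := fun k =>
    (hWinf.iterate_deriv k).differentiable (by simp)
  have hd : ∀ (k : ℕ) (y : ℝ), HasDerivAt (deriv^[k] W) (deriv^[k + 1] W y) y := by
    intro k y
    have := (hdiff k y).hasDerivAt
    rwa [Function.iterate_succ_apply' deriv k W]
  -- the DT'd function g
  set g : ℝ → ℝ → ℝ := fun t x => px w t x - w t x / x with hgdef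
  have hgt : ∀ y : ℝ, g t y = deriv W y - W y / y := fun y => rfl
  -- px w t y = deriv W y
  have hpxw : ∀ y : ℝ, px w t y = deriv W y := fun y => rfl
  ------------------------------------------------------------------
  -- Step 1: first x-derivative of g t on {x ≠ 0}
  have L1 : ∀ y : ℝ, y ≠ 0 → deriv (g t) y
      = deriv^[2] W y - deriv W y / y + W y / y ^ 2 := by
    intro y hy
    have h1 : HasDerivAt (fun z => W z / z)
        ((deriv W y * y - W y * 1) / y ^ 2) y :=
      (hd 0 y).div (hasDerivAt_id y) hy
    have h2 : HasDerivAt (g t)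
        (deriv^[2] W y - (deriv W y * y - W y * 1) / y ^ 2) y := by
      have := (hd 1 y).sub h1
      exact this
    rw [h2.deriv]
    field_simp
    ring
  ------------------------------------------------------------------
  -- handy: derivative of z ↦ f z / z^n
  have hdivpow : ∀ (k n : ℕ) (y : ℝ), y ≠ 0 →
      HasDerivAt (fun z => deriv^[k] W z / z ^ (n + 1))
        ((deriv^[k + 1] W y * y ^ (n + 1) - deriv^[k] W y * ((n + 1) * y ^ n))
          / (y ^ (n + 1)) ^ 2) y := by
    intro k n y hy
    have hp : HasDerivAt (fun z : ℝ => z ^ (n + 1)) (((n : ℝ) + 1) * y ^ n) y := by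
      simpa using hasDerivAt_pow (n + 1) y
    exact (hd k y).div hp (pow_ne_zero _ hy)
  ------------------------------------------------------------------
  -- Step 2: second x-derivative
  have L2 : ∀ y : ℝ, y ≠ 0 → deriv (fun z => deriv^[2] W z - deriv W z / z + W z / z ^ 2) y
      = deriv^[3] W y - deriv^[2] W y / y + 2 * deriv W y / y ^ 2 - 2 * W y / y ^ 3 := by
    intro y hy
    have h1 : HasDerivAt (fun z => deriv W z / z)
        ((deriv^[2] W y * y - deriv W y * 1) / y ^ 2) y :=
      (hd 1 y).div (hasDerivAt_id y) hy
    have h2 := hdivpow 0 1 y hy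
    have h3 : HasDerivAt (fun z => deriv^[2] W z - deriv W z / z + W z / z ^ 2)
        (deriv^[3] W y - (deriv^[2] W y * y - deriv W y * 1) / y ^ 2
          + (deriv^[1] W y * y ^ 2 - deriv^[0] W y * (((1 : ℕ) + 1 : ℝ) * y ^ 1)) / (y ^ 2) ^ 2)
        y := by
      have := ((hd 2 y).sub h1).add h2
      simpa [Pi.sub_def, Pi.add_def] using this
    rw [h3.deriv]
    simp only [Function.iterate_one, Function.iterate_zero, id_eq]
    field_simp
    ring
  ------------------------------------------------------------------
  -- Step 3: third x-derivative
  have L3 : ∀ y : ℝ, y ≠ 0 →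
      deriv (fun z => deriv^[3] W z - deriv^[2] W z / z + 2 * deriv W z / z ^ 2
          - 2 * W z / z ^ 3) y
      = deriv^[4] W y - deriv^[3] W y / y + 3 * deriv^[2] W y / y ^ 2
          - 6 * deriv W y / y ^ 3 + 6 * W y / y ^ 4 := by
    intro y hy
    have h1 : HasDerivAt (fun z => deriv^[2] W z / z)
        ((deriv^[3] W y * y - deriv^[2] W y * 1) / y ^ 2) y :=
      (hd 2 y).div (hasDerivAt_id y) hy
    have h2 := (hdivpow 1 1 y hy).const_mul (2 : ℝ)
    have h3 := (hdivpow 0 2 y hy).const_mul (2 : ℝ)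
    have h4 := (((hd 3 y).sub h1).add h2).sub h3
    have h5 : HasDerivAt (fun z => deriv^[3] W z - deriv^[2] W z / z + 2 * deriv W z / z ^ 2
          - 2 * W z / z ^ 3)
        (deriv^[4] W y - (deriv^[3] W y * y - deriv^[2] W y * 1) / y ^ 2
          + 2 * ((deriv^[2] W y * y ^ 2 - deriv^[1] W y * (((1 : ℕ) + 1 : ℝ) * y ^ 1)) / (y ^ 2) ^ 2)
          - 2 * ((deriv^[1] W y * y ^ 3 - deriv^[0] W y * (((2 : ℕ) + 1 : ℝ) * y ^ 2)) / (y ^ 3) ^ 2))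
        y := by
      simpa [mul_div_assoc, Pi.sub_def, Pi.add_def] using h4
    rw [h5.deriv]
    simp only [Function.iterate_one, Function.iterate_zero, id_eq]
    field_simp
    ring
  ------------------------------------------------------------------
  -- compute pxn 3 g t x using eventual equalities
  have hopen : {y : ℝ | y ≠ 0} ∈ nhds x := isOpen_ne.mem_nhds hx
  have e1 : deriv (g t) =ᶠ[nhds x]
      (fun y => deriv^[2] W y - deriv W y / y + W y / y ^ 2) := by
    filter_upwards [hopen] with y hy using L1 y hy
  have e2full : ∀ y : ℝ, y ≠ 0 → deriv^[2] (g t) y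
      = deriv^[3] W y - deriv^[2] W y / y + 2 * deriv W y / y ^ 2 - 2 * W y / y ^ 3 := by
    intro y hy
    have hopen' : {z : ℝ | z ≠ 0} ∈ nhds y := isOpen_ne.mem_nhds hy
    have e1' : deriv (g t) =ᶠ[nhds y]
        (fun z => deriv^[2] W z - deriv W z / z + W z / z ^ 2) := by
      filter_upwards [hopen'] with z hz using L1 z hz
    calc deriv^[2] (g t) y = deriv (deriv (g t)) y := by
          rw [Function.iterate_succ_apply' deriv 1 (g t), Function.iterate_one]
      _ = deriv (fun z => deriv^[2] W z - deriv W z / z + W z / z ^ 2) y := e1'.deriv_eq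
      _ = _ := L2 y hy
  have e3 : deriv^[3] (g t) x
      = deriv^[4] W x - deriv^[3] W x / x + 3 * deriv^[2] W x / x ^ 2
          - 6 * deriv W x / x ^ 3 + 6 * W x / x ^ 4 := by
    have e2nhds : deriv^[2] (g t) =ᶠ[nhds x]
        (fun y => deriv^[3] W y - deriv^[2] W y / y + 2 * deriv W y / y ^ 2
          - 2 * W y / y ^ 3) := by
      filter_upwards [hopen] with y hy using e2full y hy
    calc deriv^[3] (g t) x = deriv (deriv^[2] (g t)) x := by
          rw [Function.iterate_succ_apply' deriv 2 (g t)]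
      _ = deriv (fun y => deriv^[3] W y - deriv^[2] W y / y + 2 * deriv W y / y ^ 2
            - 2 * W y / y ^ 3) x := e2nhds.deriv_eq
      _ = _ := L3 x hx
  ------------------------------------------------------------------
  -- pt of g
  have hpxs : Smooth2 (px w) := smooth_px hw
  have hptg : pt g t x = pt (px w) t x - pt w t x / x := by
    have h1 : HasDerivAt (fun s => px w s x) (pt (px w) t x) t := by
      have := hasDerivAt_slice_t hpxs t x
      rwa [← pt_eq hpxs t x] at this
    have h2 : HasDerivAt (fun s => w s x) (pt w t x) t := by
      have := hasDerivAt_slice_t hw t x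
      rwa [← pt_eq hw t x] at this
    have h3 : HasDerivAt (fun s => g s x) (pt (px w) t x - pt w t x / x) t := by
      have := h1.sub (h2.div_const x)
      simpa [hgdef, Pi.sub_def] using this
    exact h3.deriv
  ------------------------------------------------------------------
  -- RHS x-derivative
  have hpts : Smooth2 (pt w) := smooth_pt hw
  have hRHS : px (fun t x => pt w t x - pxn 3 w t x) t x
      = px (pt w) t x - deriv^[4] W x := by
    have h1 : HasDerivAt (fun y => pt w t y) (px (pt w) t x) x := by
      have := hasDerivAt_slice_x hpts t x
      rwa [← px_eq hpts t x] at this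
    have h2 : HasDerivAt (fun y => pxn 3 w t y) (deriv^[4] W x) x := by
      have h := hd 3 x
      have : pxn 3 w t = deriv^[3] W := by rw [pxn_sect 3 w t]
      rw [show (fun y => pxn 3 w t y) = deriv^[3] W from this]
      exact h
    exact (h1.sub h2).deriv
  ------------------------------------------------------------------
  -- assemble
  have hpx3 : pxn 3 g t x = deriv^[3] (g t) x := by rw [pxn_sect 3 g t]
  have hpx1 : px g t x = deriv (g t) x := rfl
  have key : pt (px w) t x = px (pt w) t x := clairaut hw t x
  show pt g t x - pxn 3 g t x + 3 / x ^ 2 * px g t x - 3 / x ^ 3 * (px w t x - w t x / x)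
      = px (fun t x => pt w t x - pxn 3 w t x) t x - (pt w t x - pxn 3 w t x) / x
  rw [hptg, hpx3, e3, hpx1, L1 x hx, hRHS, key, hpxw x]
  have hpxn3 : pxn 3 w t x = deriv^[3] W x := by rw [pxn_sect 3 w t]
  rw [hpxn3]
  show px (pt w) t x - pt w t x / x
      - (deriv^[4] W x - deriv^[3] W x / x + 3 * deriv^[2] W x / x ^ 2
          - 6 * deriv W x / x ^ 3 + 6 * W x / x ^ 4)
      + 3 / x ^ 2 * (deriv^[2] W x - deriv W x / x + W x / x ^ 2)
      - 3 / x ^ 3 * (deriv W x - W x / x)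
    = px (pt w) t x - deriv^[4] W x - (pt w t x - deriv^[3] W x) / x
  field_simp
  ring
end
end

section
/- The function u(t,x) = 1/x solves u_t = u_{xxx} - (3/x²)u_x + (3/x³)u on any domain with x ≠ 0, and moreover 1/x is a characteristic of a conservation law of this equation: for every smooth u, (1/x)·(u_t - u_{xxx} + (3/x²)u_x - (3/x³)u) = D_t(u/x) + D_x(-u_{xx}/x - u_x/x² + u/x³). -/
noncomputable section

/-- `pxn` in terms of iterated one-variable derivatives. -/
lemma pxn_eq (n : ℕ) (f : ℝ → ℝ → ℝ) (t x : ℝ) :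
    pxn n f t x = deriv^[n] (fun y => f t y) x := by
  induction n generalizing x with
  | zero => rfl
  | succ n ih =>
    rw [pxn, Function.iterate_succ_apply', Function.iterate_succ_apply']
    show deriv (fun y => px^[n] f t y) x = _
    have : (fun y => px^[n] f t y) = deriv^[n] (fun y => f t y) := funext fun y => ih y
    rw [this]

lemma d2aux {y : ℝ} (hy : y ≠ 0) :
    deriv (fun z : ℝ => -(z ^ 2)⁻¹) y = 2 * (y ^ 3)⁻¹ := by
  have h : HasDerivAt (fun z : ℝ => -(z ^ 2)⁻¹)
      (-(-((2 : ℕ) * y ^ (2 - 1)) / (y ^ 2) ^ 2)) y :=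
    (((hasDerivAt_pow 2 y).inv (pow_ne_zero 2 hy)).neg)
  rw [h.deriv]
  field_simp
  ring

/-- u = 1/x solves u_t = u_xxx - (3/x²)u_x + (3/x³)u for x ≠ 0,
and 1/x is a characteristic of a conservation law of this equation with
conserved vector (u/x, -u_xx/x - u_x/x² + u/x³). -/
theorem stmt_12 :
    (∀ t x : ℝ, x ≠ 0 →
      pt (fun _ x => 1 / x) t x
      = pxn 3 (fun _ x => 1 / x) t x
        - 3 / x ^ 2 * px (fun _ x => 1 / x) t x
        + 3 / x ^ 3 * (1 / x))
    ∧ (∀ u : ℝ → ℝ → ℝ, Smooth2 u → ∀ t x : ℝ, x ≠ 0 →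
        (1 / x) * (pt u t x - pxn 3 u t x + 3 / x ^ 2 * px u t x
            - 3 / x ^ 3 * u t x)
        = pt (fun t x => u t x / x) t x
          + px (fun t x => -(pxn 2 u t x) / x - px u t x / x ^ 2
              + u t x / x ^ 3) t x) := by
  constructor
  · intro t x hx
    have hinv : (fun y : ℝ => (1:ℝ) / y) = fun y : ℝ => y⁻¹ := by
      funext y; rw [one_div]
    have h1 : deriv (fun y : ℝ => (1:ℝ) / y) = fun y : ℝ => -(y ^ 2)⁻¹ := by
      rw [hinv]; funext y; exact deriv_inv
    -- second derivative at points ≠ 0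
    have h3 : deriv^[3] (fun y : ℝ => (1:ℝ) / y) x = -(6 * (x ^ 4)⁻¹) := by
      show deriv (deriv (deriv (fun y : ℝ => (1:ℝ) / y))) x = _
      rw [h1]
      have hev : deriv (fun z : ℝ => -(z ^ 2)⁻¹) =ᶠ[nhds x] fun y : ℝ => 2 * (y ^ 3)⁻¹ :=
        (eventually_ne_nhds hx).mono fun y hy => d2aux hy
      rw [hev.deriv_eq]
      have h : HasDerivAt (fun y : ℝ => 2 * (y ^ 3)⁻¹)
          (2 * (-((3 : ℕ) * x ^ (3 - 1)) / (x ^ 3) ^ 2)) x :=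
        ((hasDerivAt_pow 3 x).inv (pow_ne_zero 3 hx)).const_mul 2
      rw [h.deriv]
      field_simp
      ring
    have hpt : pt (fun _ x => 1 / x) t x = 0 := by
      show deriv (fun _ : ℝ => (1:ℝ) / x) t = 0
      exact deriv_const t _
    have hpx : px (fun _ x => 1 / x) t x = -(x ^ 2)⁻¹ := by
      show deriv (fun y : ℝ => (1:ℝ) / y) x = _
      rw [h1]
    rw [hpt, hpx, pxn_eq]
    show (0:ℝ) = deriv^[3] (fun y : ℝ => (1:ℝ)/y) x - 3 / x ^ 2 * -(x ^ 2)⁻¹ + 3 / x ^ 3 * (1 / x)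
    rw [h3]
    field_simp
    ring
  · intro u hu t x hx
    set g : ℝ → ℝ := fun y => u t y with hg
    have hgsm : ContDiff ℝ (⊤ : ℕ∞) g := by
      have : g = Function.uncurry u ∘ fun y => (t, y) := rfl
      rw [this]
      exact hu.comp (contDiff_const.prodMk contDiff_id)
    have hd : ∀ n : ℕ, HasDerivAt (deriv^[n] g) (deriv^[n + 1] g x) x := by
      intro n
      have := (((hgsm.of_le (by simp)).iterate_deriv n).differentiable (by simp)).differentiableAt (x := x)
      have h := this.hasDerivAt
      rwa [show deriv^[n + 1] g x = deriv (deriv^[n] g) x from by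
        rw [Function.iterate_succ_apply']]
    -- t-derivative part
    have hts : DifferentiableAt ℝ (fun s => u s x) t := by
      have : (fun s => u s x) = Function.uncurry u ∘ fun s => (s, x) := rfl
      rw [this]
      exact ((hu.differentiable (by simp)).comp
        (differentiable_id.prodMk (differentiable_const x))).differentiableAt
    have hpt : pt (fun t x => u t x / x) t x = pt u t x / x := by
      show deriv (fun s => u s x / x) t = deriv (fun s => u s x) t / x
      exact deriv_div_const x
    -- x-derivative (flux) part
    have hflux : px (fun t x => -(pxn 2 u t x) / x - px u t x / x ^ 2
        + u t x / x ^ 3) t x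
        = -(deriv^[3] g x) / x + deriv^[2] g x / x ^ 2
          - (deriv^[2] g x / x ^ 2 - 2 * deriv g x / x ^ 3)
          + (deriv g x / x ^ 3 - 3 * g x / x ^ 4) := by
      have hfun : (fun y => -(pxn 2 u t y) / y - px u t y / y ^ 2 + u t y / y ^ 3)
          = fun y => -(deriv^[2] g y) / y - deriv g y / y ^ 2 + g y / y ^ 3 := by
        funext y
        rw [pxn_eq]
        rfl
      show deriv (fun y => -(pxn 2 u t y) / y - px u t y / y ^ 2 + u t y / y ^ 3) x = _
      rw [hfun]
      have H1 : HasDerivAt (fun y => -(deriv^[2] g y) / y)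
          ((-(deriv^[3] g x) * x - -(deriv^[2] g x) * 1) / x ^ 2) x :=
        (hd 2).neg.div (hasDerivAt_id x) hx
      have H2 : HasDerivAt (fun y => deriv g y / y ^ 2)
          ((deriv^[2] g x * x ^ 2 - deriv g x * ((2 : ℕ) * x ^ (2 - 1))) / (x ^ 2) ^ 2) x :=
        (hd 1).div (hasDerivAt_pow 2 x) (pow_ne_zero 2 hx)
      have H3 : HasDerivAt (fun y => g y / y ^ 3)
          ((deriv g x * x ^ 3 - g x * ((3 : ℕ) * x ^ (3 - 1))) / (x ^ 3) ^ 2) x := by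
        have := (hd 0).div (hasDerivAt_pow 3 x) (pow_ne_zero 3 hx)
        simpa [Pi.div_def] using this
      have H : HasDerivAt (fun y => -(deriv^[2] g y) / y - deriv g y / y ^ 2 + g y / y ^ 3) _ x :=
        (H1.sub H2).add H3
      rw [H.deriv]
      push_cast
      field_simp
      ring
    rw [hpt, hflux, pxn_eq]
    have hpx : px u t x = deriv g x := rfl
    rw [hpx]
    field_simp
    ring
end
end
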